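/- Let 1 < p < ∞, t > 0, s > 0, and suppose there exists C ≥ 0 such that for every f ∈ L^p(ℂⁿ, dv_s) the function w ↦ e^{t⟨z,w⟩} f(w) is dv_t-integrable for a.e. z ∈ ℂⁿ and ∫_{ℂⁿ} |S_t f|^p dv_s ≤ C^p ∫_{ℂⁿ} |f|^p dv_s, where S_t f(z) = ∫_{ℂⁿ} e^{t⟨z,w⟩} f(w) dv_t(w). Then p·t > s. -/

import Mathlib

open MeasureTheory

/-- `|z|² = |z₁|² + ⋯ + |zₙ|²` on `ℂⁿ`. -/
noncomputable def nsq {n : ℕ} (z : Fin n → ℂ) : ℝ := ∑ i, Complex.normSq (z i)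

/-- `⟨z,w⟩ = z₁·conj w₁ + ⋯ + zₙ·conj wₙ` on `ℂⁿ`. -/
noncomputable def herm {n : ℕ} (z w : Fin n → ℂ) : ℂ := ∑ i, z i * (starRingEnd ℂ) (w i)

/-- The Gaussian probability measure `dv_t(z) = (t/π)^n e^{-t|z|²} dv(z)` on `ℂⁿ`. -/
noncomputable def gaussMeasure (n : ℕ) (t : ℝ) : Measure (Fin n → ℂ) :=
  volume.withDensity fun z => ENNReal.ofReal ((t / Real.pi) ^ n * Real.exp (-t * nsq z))

/-- Boundedness of the operator `S_t f(z) = ∫ e^{t⟨z,w⟩} f(w) dv_t(w)` on `L^p(ℂⁿ, dv_s)`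
with constant `C`: for every `f ∈ L^p(dv_s)` the integrand is `dv_t`-integrable for a.e. `z`
and `∫ |S_t f|^p dv_s ≤ C^p ∫ |f|^p dv_s`. -/
def SBounded (n : ℕ) (t s p C : ℝ) : Prop :=
  ∀ f : (Fin n → ℂ) → ℂ, MemLp f (ENNReal.ofReal p) (gaussMeasure n s) →
    (∀ᵐ z ∂(volume : Measure (Fin n → ℂ)),
      Integrable (fun w => Complex.exp ((t : ℂ) * herm z w) * f w) (gaussMeasure n t)) ∧
    ∫⁻ z, ENNReal.ofReal
        (‖∫ w, Complex.exp ((t : ℂ) * herm z w) * f w ∂(gaussMeasure n t)‖ ^ p)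
      ∂(gaussMeasure n s)
      ≤ ENNReal.ofReal (C ^ p) *
        ∫⁻ z, ENNReal.ofReal (‖f z‖ ^ p) ∂(gaussMeasure n s)

/-!
If `p t ≤ s`, the function `f w = e^{t|w|²} / (1 + |w|²)^n` lies in `L^p(dv_s)`: `|f|^p dv_s` is
dominated by `(1 + |w|²)^{-np} dv`, integrable because `2np > 2n = dim_ℝ ℂⁿ`. On the other hand
`e^{t⟨z,w⟩} f(w) dv_t(w)` has Lebesgue density `(t/π)^n e^{t Re⟨z,w⟩} / (1 + |w|²)^n`, which for
`z ≠ 0` is exponentially large on the unit balls around `c • z` as `c → ∞`. So it is not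
integrable, and `S_t f(z)` is undefined at every `z ≠ 0`.
-/

open Filter Metric Module

theorem not_integrable_of_tendsto_le_on_closedBall {E ι : Type*} [NormedAddCommGroup E]
    [MeasurableSpace E] [BorelSpace E] [ProperSpace E] {μ : Measure E} [μ.IsAddHaarMeasure]
    {l : Filter ι} [l.NeBot] {G : E → ℝ} {x : ι → E} {K : ι → ℝ} {r : ℝ} (hr : 0 < r)
    (hK : Tendsto K l atTop) (hGK : ∀ᶠ i in l, ∀ w ∈ closedBall (x i) r, K i ≤ G w) :
    ¬ Integrable G μ := by
  intro hG
  have hV : 0 < μ.real (closedBall 0 r) :=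
    ENNReal.toReal_pos (measure_closedBall_pos μ 0 hr).ne' measure_closedBall_lt_top.ne
  have hbound : ∀ᶠ i in l, K i * μ.real (closedBall 0 r) ≤ ∫ w, ‖G w‖ ∂μ := by
    filter_upwards [hGK] with i hi
    calc K i * μ.real (closedBall 0 r) = K i * μ.real (closedBall (x i) r) := by
          simp only [Measure.real, Measure.addHaar_closedBall_center]
      _ ≤ ∫ w in closedBall (x i) r, G w ∂μ :=
          setIntegral_ge_of_const_le_real measurableSet_closedBall
            measure_closedBall_lt_top.ne hi hG.integrableOn
      _ ≤ ∫ w in closedBall (x i) r, ‖G w‖ ∂μ :=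
          integral_mono hG.integrableOn hG.norm.integrableOn fun w => Real.le_norm_self _
      _ ≤ ∫ w, ‖G w‖ ∂μ :=
          setIntegral_le_integral hG.norm (Eventually.of_forall fun w => norm_nonneg _)
  obtain ⟨i, hi, hlt⟩ := (hbound.and ((hK.atTop_mul_const hV).eventually_gt_atTop _)).exists
  exact hlt.not_ge hi

section CoordinateSpace

variable {n : ℕ}

lemma nsq_eq_sum_sq_norm (w : Fin n → ℂ) : nsq w = ∑ i, ‖w i‖ ^ 2 := by
  simp only [nsq, Complex.sq_norm]

lemma nsq_nonneg (w : Fin n → ℂ) : 0 ≤ nsq w :=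
  Finset.sum_nonneg fun _ _ => Complex.normSq_nonneg _

lemma nsq_pos {z : Fin n → ℂ} (hz : z ≠ 0) : 0 < nsq z := by
  obtain ⟨i, hi⟩ := Function.ne_iff.mp hz
  exact Finset.sum_pos' (fun j _ => Complex.normSq_nonneg _)
    ⟨i, Finset.mem_univ i, Complex.normSq_pos.mpr hi⟩

lemma one_add_nsq_pos (w : Fin n → ℂ) : 0 < 1 + nsq w := by
  linarith [nsq_nonneg w]

lemma continuous_nsq : Continuous (nsq (n := n)) :=
  continuous_finsetSum _ fun i _ => Complex.continuous_normSq.comp (continuous_apply i)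

lemma sq_norm_le_nsq (w : Fin n → ℂ) : ‖w‖ ^ 2 ≤ nsq w := by
  have hle : ‖w‖ ≤ √(nsq w) := by
    refine (pi_norm_le_iff_of_nonneg (Real.sqrt_nonneg _)).mpr fun i => ?_
    rw [Real.le_sqrt (norm_nonneg _) (nsq_nonneg w), nsq_eq_sum_sq_norm]
    exact Finset.single_le_sum (f := fun i => ‖w i‖ ^ 2) (fun _ _ => by positivity)
      (Finset.mem_univ i)
  exact (Real.le_sqrt (norm_nonneg _) (nsq_nonneg w)).mp hle

lemma nsq_le_card_mul_sq_norm (w : Fin n → ℂ) : nsq w ≤ n * ‖w‖ ^ 2 := by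
  rw [nsq_eq_sum_sq_norm]
  calc ∑ i, ‖w i‖ ^ 2 ≤ ∑ _i : Fin n, ‖w‖ ^ 2 := by
        gcongr with i; exact norm_le_pi_norm w i
    _ = n * ‖w‖ ^ 2 := by simp

lemma herm_add_right (z u v : Fin n → ℂ) : herm z (u + v) = herm z u + herm z v := by
  simp only [herm, Pi.add_apply, map_add, mul_add, Finset.sum_add_distrib]

lemma herm_real_smul_self (z : Fin n → ℂ) (c : ℝ) : herm z (c • z) = c * nsq z := by
  simp only [herm, nsq, Pi.smul_apply, Complex.real_smul, map_mul, Complex.conj_ofReal,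
    Complex.ofReal_sum, Finset.mul_sum, Complex.normSq_eq_conj_mul_self]
  exact Finset.sum_congr rfl fun i _ => by ring

lemma norm_herm_le (z u : Fin n → ℂ) : ‖herm z u‖ ≤ (∑ i, ‖z i‖) * ‖u‖ := by
  refine (norm_sum_le _ _).trans ?_
  rw [Finset.sum_mul]
  gcongr with i
  rw [norm_mul, Complex.norm_conj]
  gcongr
  exact norm_le_pi_norm u i

lemma re_herm_ge_of_mem_closedBall {z w : Fin n → ℂ} {c r : ℝ} (hw : w ∈ closedBall (c • z) r) :
    c * nsq z - (∑ i, ‖z i‖) * r ≤ (herm z w).re := by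
  have hsplit : herm z w = c * nsq z + herm z (w - c • z) := by
    rw [← herm_real_smul_self, ← herm_add_right, add_sub_cancel]
  have hdev : ‖herm z (w - c • z)‖ ≤ (∑ i, ‖z i‖) * r :=
    (norm_herm_le z _).trans (by gcongr; rwa [← dist_eq_norm, ← mem_closedBall])
  rw [hsplit, Complex.add_re, ← Complex.ofReal_mul, Complex.ofReal_re]
  linarith [neg_abs_le (herm z (w - c • z)).re, Complex.abs_re_le_norm (herm z (w - c • z))]

lemma one_add_nsq_le_of_mem_closedBall {z w : Fin n → ℂ} {c : ℝ} (hc : 1 ≤ c)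
    (hw : w ∈ closedBall (c • z) 1) : 1 + nsq w ≤ (1 + n * (‖z‖ + 1) ^ 2) * c ^ 2 := by
  have hnorm : ‖w‖ ≤ c * (‖z‖ + 1) := by
    calc ‖w‖ ≤ ‖c • z‖ + ‖w - c • z‖ := norm_le_norm_add_norm_sub' w (c • z)
      _ ≤ c * ‖z‖ + 1 := by
          rw [norm_smul, Real.norm_of_nonneg (by linarith), ← dist_eq_norm]
          gcongr; exact hw
      _ ≤ c * (‖z‖ + 1) := by nlinarith
  have hsq : ‖w‖ ^ 2 ≤ c ^ 2 * (‖z‖ + 1) ^ 2 := by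
    rw [← mul_pow]; gcongr
  nlinarith [nsq_le_card_mul_sq_norm w, (Nat.cast_nonneg n : (0 : ℝ) ≤ n),
    sq_nonneg (‖z‖ + 1)]

end CoordinateSpace

section Gaussian

variable {n : ℕ}

noncomputable def gaussDensity (n : ℕ) (t : ℝ) (w : Fin n → ℂ) : ℝ :=
  (t / Real.pi) ^ n * Real.exp (-t * nsq w)

lemma gaussMeasure_eq_withDensity (t : ℝ) :
    gaussMeasure n t = volume.withDensity fun w => ENNReal.ofReal (gaussDensity n t w) :=
  rfl

lemma gaussDensity_nonneg {t : ℝ} (ht : 0 ≤ t) (w : Fin n → ℂ) : 0 ≤ gaussDensity n t w := by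
  unfold gaussDensity; positivity

lemma continuous_gaussDensity (t : ℝ) : Continuous (gaussDensity n t) :=
  continuous_const.mul (continuous_const.mul continuous_nsq).rexp

lemma integrable_gaussMeasure_iff {t : ℝ} (ht : 0 ≤ t) {g : (Fin n → ℂ) → ℝ} :
    Integrable g (gaussMeasure n t) ↔ Integrable (fun w => g w * gaussDensity n t w) volume := by
  rw [gaussMeasure_eq_withDensity, integrable_withDensity_iff
    (continuous_gaussDensity (n := n) t).measurable.ennreal_ofReal
    (ae_of_all _ fun _ => ENNReal.ofReal_lt_top)]
  simp only [ENNReal.toReal_ofReal (gaussDensity_nonneg ht _)]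

noncomputable def testFun (n : ℕ) (t : ℝ) (w : Fin n → ℂ) : ℝ :=
  Real.exp (t * nsq w) / (1 + nsq w) ^ n

lemma testFun_pos (t : ℝ) (w : Fin n → ℂ) : 0 < testFun n t w := by
  have := one_add_nsq_pos w
  unfold testFun; positivity

lemma continuous_testFun (t : ℝ) : Continuous (testFun n t) :=
  ((continuous_const.mul continuous_nsq).rexp).div ((continuous_const.add continuous_nsq).pow n)
    fun w => (pow_pos (one_add_nsq_pos w) n).ne'

lemma testFun_mul_gaussDensity (t : ℝ) (w : Fin n → ℂ) :
    testFun n t w * gaussDensity n t w = (t / Real.pi) ^ n / (1 + nsq w) ^ n := by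
  have hexp : Real.exp (t * nsq w) * Real.exp (-t * nsq w) = 1 := by
    rw [← Real.exp_add]; simp
  calc testFun n t w * gaussDensity n t w
      = (t / Real.pi) ^ n * (Real.exp (t * nsq w) * Real.exp (-t * nsq w)) / (1 + nsq w) ^ n := by
        rw [testFun, gaussDensity]; ring
    _ = (t / Real.pi) ^ n / (1 + nsq w) ^ n := by rw [hexp, mul_one]

lemma testFun_rpow_mul_gaussDensity_le {p t s : ℝ} (hp : 0 ≤ p) (hs : 0 ≤ s) (hpts : p * t ≤ s)
    (w : Fin n → ℂ) :
    testFun n t w ^ p * gaussDensity n s w ≤ (s / Real.pi) ^ n * (1 + ‖w‖ ^ 2) ^ (-(n * p)) := by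
  have hq := one_add_nsq_pos w
  have hrpow : testFun n t w ^ p = Real.exp (p * t * nsq w) * (1 + nsq w) ^ (-(n * p)) := by
    rw [testFun, Real.div_rpow (Real.exp_pos _).le (by positivity), ← Real.exp_mul,
      ← Real.rpow_natCast, ← Real.rpow_mul hq.le, Real.rpow_neg hq.le, div_eq_mul_inv]
    ring_nf
  have hexp : Real.exp (p * t * nsq w) * Real.exp (-s * nsq w) ≤ 1 := by
    rw [← Real.exp_add, Real.exp_le_one_iff]
    nlinarith [nsq_nonneg w]
  have hbase : (1 + nsq w) ^ (-(n * p)) ≤ (1 + ‖w‖ ^ 2) ^ (-(n * p)) :=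
    Real.rpow_le_rpow_of_nonpos (by positivity) (by linarith [sq_norm_le_nsq w])
      (by simp only [neg_nonpos]; positivity)
  calc testFun n t w ^ p * gaussDensity n s w
      = (s / Real.pi) ^ n * (Real.exp (p * t * nsq w) * Real.exp (-s * nsq w)) *
          (1 + nsq w) ^ (-(n * p)) := by
        rw [hrpow, gaussDensity]; ring
    _ ≤ (s / Real.pi) ^ n * 1 * (1 + ‖w‖ ^ 2) ^ (-(n * p)) := by
        gcongr
    _ = (s / Real.pi) ^ n * (1 + ‖w‖ ^ 2) ^ (-(n * p)) := by ring

lemma finrank_real_pi_complex : finrank ℝ (Fin n → ℂ) = 2 * n := by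
  simp [Module.finrank_pi_fintype, Complex.finrank_real_complex, mul_comm]

lemma memLp_testFun {p t s : ℝ} (hn : 0 < n) (hp : 1 < p) (ht : 0 ≤ t) (hpts : p * t ≤ s) :
    MemLp (fun w => (testFun n t w : ℂ)) (ENNReal.ofReal p) (gaussMeasure n s) := by
  have hs : 0 ≤ s := by nlinarith
  have hdim : (finrank ℝ (Fin n → ℂ) : ℝ) < 2 * (n * p) := by
    rw [finrank_real_pi_complex]
    push_cast
    nlinarith [(Nat.one_le_cast (α := ℝ)).mpr hn]
  have hmeas : AEStronglyMeasurable (fun w => (testFun n t w : ℂ)) (gaussMeasure n s) :=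
    (Complex.continuous_ofReal.comp (continuous_testFun t)).aestronglyMeasurable
  rw [← integrable_norm_rpow_iff hmeas (by simp; linarith) ENNReal.ofReal_ne_top,
    ENNReal.toReal_ofReal (by linarith), integrable_gaussMeasure_iff hs]
  refine ((integrable_rpow_neg_one_add_norm_sq hdim).const_mul ((s / Real.pi) ^ n)).mono'
    ?_ (ae_of_all _ fun w => ?_)
  · have := continuous_testFun (n := n) t
    have := continuous_gaussDensity (n := n) s
    exact Continuous.aestronglyMeasurable (by fun_prop (disch := linarith))
  rw [Complex.norm_real, Real.norm_of_nonneg (testFun_pos t w).le, Real.norm_of_nonneg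
    (mul_nonneg (Real.rpow_nonneg (testFun_pos t w).le p) (gaussDensity_nonneg hs w)), neg_div,
    mul_div_cancel_left₀ _ two_ne_zero]
  exact testFun_rpow_mul_gaussDensity_le (by linarith) hs hpts w

end Gaussian

lemma not_integrable_exp_herm_mul_testFun {n : ℕ} {t : ℝ} (ht : 0 < t) {z : Fin n → ℂ}
    (hz : z ≠ 0) :
    ¬ Integrable (fun w => Complex.exp ((t : ℂ) * herm z w) * (testFun n t w : ℂ))
      (gaussMeasure n t) := by
  intro h
  have hG := (integrable_gaussMeasure_iff ht.le).mp h.norm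
  set A := ∑ i, ‖z i‖
  set D := 1 + n * (‖z‖ + 1) ^ 2
  have hK := (tendsto_exp_mul_div_rpow_atTop (2 * n) (t * nsq z)
    (mul_pos ht (nsq_pos hz))).const_mul_atTop
      (by positivity : 0 < (t / Real.pi) ^ n * Real.exp (-(t * A)) / D ^ n)
  refine not_integrable_of_tendsto_le_on_closedBall (x := fun c : ℝ => c • z) one_pos hK ?_ hG
  filter_upwards [eventually_ge_atTop 1] with c hc w hw
  have hre : t * (c * nsq z - A) ≤ t * (herm z w).re := by
    gcongr; simpa using re_herm_ge_of_mem_closedBall hw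
  have hden : (1 + nsq w) ^ n ≤ D ^ n * c ^ (2 * (n : ℝ)) := by
    rw [show 2 * (n : ℝ) = ((2 * n : ℕ) : ℝ) by push_cast; ring, Real.rpow_natCast, pow_mul,
      ← mul_pow]
    gcongr
    · exact (one_add_nsq_pos w).le
    · exact one_add_nsq_le_of_mem_closedBall hc hw
  calc (t / Real.pi) ^ n * Real.exp (-(t * A)) / D ^ n *
        (Real.exp (t * nsq z * c) / c ^ (2 * (n : ℝ)))
      = (t / Real.pi) ^ n * Real.exp (t * (c * nsq z - A)) / (D ^ n * c ^ (2 * (n : ℝ))) := by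
        rw [mul_sub, Real.exp_sub, Real.exp_neg]
        field_simp
    _ ≤ (t / Real.pi) ^ n * Real.exp (t * (herm z w).re) / (1 + nsq w) ^ n := by
        have := one_add_nsq_pos w
        gcongr
    _ = ‖Complex.exp ((t : ℂ) * herm z w) * (testFun n t w : ℂ)‖ * gaussDensity n t w := by
        rw [norm_mul, Complex.norm_exp, Complex.re_ofReal_mul, Complex.norm_real,
          Real.norm_of_nonneg (testFun_pos t w).le, mul_assoc, testFun_mul_gaussDensity]
        ring

theorem stmt4_general (n : ℕ) (hn : 0 < n) (p t s : ℝ) (hp : 1 < p) (ht : 0 < t)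
    (h : ∃ C : ℝ, 0 ≤ C ∧ SBounded n t s p C) :
    p * t > s := by
  by_contra! hle
  obtain ⟨C, -, hS⟩ := h
  have : Nonempty (Fin n) := Fin.pos_iff_nonempty.mp hn
  obtain ⟨z, hz, hz0⟩ :=
    ((hS _ (memLp_testFun hn hp ht.le hle)).1.and (Measure.ae_ne volume 0)).exists
  exact not_integrable_exp_herm_mul_testFun ht hz0 hz

theorem stmt4 (n : ℕ) (hn : 0 < n) (p t s : ℝ) (hp : 1 < p) (ht : 0 < t) (hs : 0 < s)
    (h : ∃ C : ℝ, 0 ≤ C ∧ SBounded n t s p C) :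
    p * t > s :=
  stmt4_general n hn p t s hp ht h
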